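/- Let d be a positive integer and let W₁, …, W_f be a set of mutually quasi-unbiased weighing matrices for parameters (d, 2, 4, 1), i.e., each W_i is a weighing matrix of order d and weight 2 and for i ≠ j the matrix W_i·W_jᵀ is a weighing matrix of weight 4. Then f ≤ d − 1. -/

import Mathlib

open Matrix

/-- `W` is a weighing matrix of order `d` and weight `k`: a `d × d` real matrix with all
entries in `{-1, 0, 1}` such that `W * Wᵀ = k • 1`. -/
def IsWeighing {d : ℕ} (k : ℝ) (W : Matrix (Fin d) (Fin d) ℝ) : Prop :=
  (∀ i j, W i j = -1 ∨ W i j = 0 ∨ W i j = 1) ∧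
    W * Wᵀ = k • (1 : Matrix (Fin d) (Fin d) ℝ)

/-- A family of mutually unbiased weighing matrices of order `d` and weight `k`:
each member is a weighing matrix of weight `k`, and for distinct members
`(1/√k) • (Wᵢ * Wⱼᵀ)` is again a weighing matrix of weight `k`. -/
def MUWM {d f : ℕ} (k : ℝ) (W : Fin f → Matrix (Fin d) (Fin d) ℝ) : Prop :=
  (∀ i, IsWeighing k (W i)) ∧
    ∀ i j, i ≠ j → IsWeighing k ((Real.sqrt k)⁻¹ • (W i * (W j)ᵀ))

/-- A family of mutually quasi-unbiased weighing matrices for parameters `(d, k, l, a)`: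
each member is a weighing matrix of weight `k`, and for distinct members
`(1/√a) • (Wᵢ * Wⱼᵀ)` is a weighing matrix of weight `l`. -/
def MQUWM {d f : ℕ} (k l a : ℝ) (W : Fin f → Matrix (Fin d) (Fin d) ℝ) : Prop :=
  (∀ i, IsWeighing k (W i)) ∧
    ∀ i j, i ≠ j → IsWeighing l ((Real.sqrt a)⁻¹ • (W i * (W j)ᵀ))

/-! A weight-two weighing matrix meets each column `a` in exactly two rows, and their
orthogonality forces both rows to be supported on one pair `{a, b}` with `b ≠ a`. Fixing `a`, every
member `Wᵢ` of the family thus picks a column `bᵢ ≠ a`. If `bᵢ = bⱼ` for `i ≠ j`, every entry of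
`Wᵢ Wⱼᵀ` between those rows is `±1 ± 1`, and lying in `{-1, 0, 1}` it vanishes: the two rows of `Wᵢ`
and one row of `Wⱼ` would be three pairwise orthogonal nonzero vectors in a plane. Hence `i ↦ bᵢ`
is injective into the `d - 1` columns other than `a`. -/

open Finset Function

lemma eq_zero_of_orthogonal_to_orthogonal_pair {p q s t u v : ℝ} (hp : p ≠ 0) (hs : s ≠ 0)
    (hps : p * s + q * t = 0) (hpu : p * u + q * v = 0) (hsu : s * u + t * v = 0) : u = 0 := by
  have hdet : p * t - q * s ≠ 0 := by
    intro h
    have : (p * t - q * s) ^ 2 + (p * s + q * t) ^ 2 = (p ^ 2 + q ^ 2) * (s ^ 2 + t ^ 2) := by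
      ring
    rw [h, hps] at this
    nlinarith [mul_pos (sq_pos_iff.mpr hp) (sq_pos_iff.mpr hs), sq_nonneg q, sq_nonneg t]
  exact mul_left_cancel₀ hdet (by linear_combination t * hpu - q * hsu)

lemma add_eq_zero_of_sq_eq_one {x y : ℝ} (hx : x ^ 2 = 1) (hy : y ^ 2 = 1)
    (h : x + y = -1 ∨ x + y = 0 ∨ x + y = 1) : x + y = 0 := by
  rcases sq_eq_one_iff.mp hx with rfl | rfl <;> rcases sq_eq_one_iff.mp hy with rfl | rfl <;>
    revert h <;> norm_num

lemma sq_eq_one_of_ne_zero {z : ℝ} (hz : z = -1 ∨ z = 0 ∨ z = 1) (h0 : z ≠ 0) : z ^ 2 = 1 := by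
  obtain rfl | rfl : z = -1 ∨ z = 1 := by tauto
  all_goals norm_num

section SupportOnPair

variable {ι : Type*} [Fintype ι]

lemma ncard_support_eq_sum_mul_self {v : ι → ℝ} (hv : ∀ c, v c = -1 ∨ v c = 0 ∨ v c = 1) :
    ((support v).ncard : ℝ) = ∑ c, v c * v c := by
  classical
  rw [Set.ncard_eq_toFinset_card', ← sum_filter_ne_zero, card_eq_sum_ones, Nat.cast_sum]
  refine sum_congr (by ext; simp) fun c hc => ?_
  rw [← sq, sq_eq_one_of_ne_zero (hv c) (by simpa using hc), Nat.cast_one]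

lemma ncard_support_eq_two {v : ι → ℝ} (hv : ∀ c, v c = -1 ∨ v c = 0 ∨ v c = 1)
    (h2 : ∑ c, v c * v c = 2) : (support v).ncard = 2 := by
  exact_mod_cast (ncard_support_eq_sum_mul_self hv).trans h2

lemma exists_support_eq_pair {v : ι → ℝ} (hv : ∀ c, v c = -1 ∨ v c = 0 ∨ v c = 1)
    (h2 : ∑ c, v c * v c = 2) {a : ι} (ha : v a ≠ 0) : ∃ b ≠ a, support v = {a, b} := by
  obtain ⟨b, hb⟩ : ∃ b, support v \ {a} = {b} := by
    rw [← Set.ncard_eq_one, Set.ncard_sdiff_singleton_of_mem ha, ncard_support_eq_two hv h2]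
  refine ⟨b, fun hba => (hb.symm.subset rfl : b ∈ support v \ {a}).2 hba, ?_⟩
  rw [← hb, Set.insert_sdiff_singleton, Set.insert_eq_of_mem ha]

lemma dotProduct_eq_add_of_support_subset {u : ι → ℝ} {a b : ι} (hab : a ≠ b)
    (hu : support u ⊆ {a, b}) (w : ι → ℝ) : u ⬝ᵥ w = u a * w a + u b * w b :=
  Fintype.sum_eq_add a b hab fun c ⟨hca, hcb⟩ => by
    rw [notMem_support.mp (fun h => by simpa [hca, hcb] using hu h : c ∉ support u), zero_mul]

lemma dotProduct_eq_zero_of_support_eq_pair {u w : ι → ℝ} {a b : ι}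
    (hu : ∀ c, u c = -1 ∨ u c = 0 ∨ u c = 1) (hw : ∀ c, w c = -1 ∨ w c = 0 ∨ w c = 1)
    (hab : a ≠ b) (hsu : support u = {a, b}) (hsw : support w = {a, b})
    (h : u ⬝ᵥ w = -1 ∨ u ⬝ᵥ w = 0 ∨ u ⬝ᵥ w = 1) : u ⬝ᵥ w = 0 := by
  have sq_one : ∀ c ∈ ({a, b} : Set ι), (u c * w c) ^ 2 = 1 := fun c hc => by
    rw [mul_pow, sq_eq_one_of_ne_zero (hu c) (hsu.symm ▸ hc :),
      sq_eq_one_of_ne_zero (hw c) (hsw.symm ▸ hc :), one_mul]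
  rw [dotProduct_eq_add_of_support_subset hab hsu.subset] at h ⊢
  exact add_eq_zero_of_sq_eq_one (sq_one a (by simp)) (sq_one b (by simp)) h

lemma dotProduct_ne_zero_of_support_eq_pair {x y z : ι → ℝ} {a b : ι} (hab : a ≠ b)
    (hx : support x = {a, b}) (hy : support y = {a, b}) (hz : support z = {a, b})
    (hxy : x ⬝ᵥ y = 0) (hxz : x ⬝ᵥ z = 0) : y ⬝ᵥ z ≠ 0 := by
  intro hyz
  rw [dotProduct_eq_add_of_support_subset hab hx.subset] at hxy hxz
  rw [dotProduct_eq_add_of_support_subset hab hy.subset] at hyz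
  have ne_zero_at_a (v : ι → ℝ) (hv : support v = {a, b}) : v a ≠ 0 :=
    show a ∈ support v by simp [hv]
  exact ne_zero_at_a z hz <| eq_zero_of_orthogonal_to_orthogonal_pair (ne_zero_at_a x hx)
    (ne_zero_at_a y hy) hxy hxz hyz

end SupportOnPair

namespace IsWeighing

variable {d : ℕ} {k : ℝ} {W : Matrix (Fin d) (Fin d) ℝ}

lemma dotProduct_row (hW : IsWeighing k W) (r s : Fin d) :
    W r ⬝ᵥ W s = if r = s then k else 0 :=
  (congrFun₂ hW.2 r s).trans (by simp [Matrix.one_apply])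

lemma transpose (hW : IsWeighing k W) (hk : k ≠ 0) : IsWeighing k Wᵀ := by
  refine ⟨fun i j => hW.1 j i, ?_⟩
  have hinv : W * (k⁻¹ • Wᵀ) = 1 := by
    rw [Matrix.mul_smul, hW.2, smul_smul, inv_mul_cancel₀ hk, one_smul]
  rw [transpose_transpose, ← smul_right_inj (inv_ne_zero hk), smul_smul, inv_mul_cancel₀ hk,
    one_smul, ← Matrix.smul_mul, mul_eq_one_comm.mp hinv]

lemma exists_rows_support_eq_pair (hW : IsWeighing 2 W) (a : Fin d) :
    ∃ b ≠ a, ∃ r₁ r₂, r₁ ≠ r₂ ∧ support (W r₁) = {a, b} ∧ support (W r₂) = {a, b} := by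
  have hrow (r : Fin d) : ∑ c, W r c * W r c = 2 := (hW.dotProduct_row r r).trans (if_pos rfl)
  obtain ⟨r₁, r₂, hr, hcol⟩ := Set.ncard_eq_two.mp <| ncard_support_eq_two (fun r => hW.1 r a)
    (((hW.transpose two_ne_zero).dotProduct_row a a).trans (if_pos rfl))
  have hr₁ : W r₁ a ≠ 0 := (hcol.symm ▸ (by simp) : r₁ ∈ support fun r => W r a)
  have hr₂ : W r₂ a ≠ 0 := (hcol.symm ▸ (by simp) : r₂ ∈ support fun r => W r a)
  obtain ⟨b₁, hb₁, hs₁⟩ := exists_support_eq_pair (hW.1 r₁) (hrow r₁) hr₁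
  obtain ⟨b₂, hb₂, hs₂⟩ := exists_support_eq_pair (hW.1 r₂) (hrow r₂) hr₂
  obtain rfl : b₁ = b₂ := by
    by_contra hne
    have horth : W r₁ ⬝ᵥ W r₂ = 0 := by simpa [hr] using hW.dotProduct_row r₁ r₂
    have hb₁r₂ : W r₂ b₁ = 0 := notMem_support.mp (by simp [hs₂, hb₁, hne])
    rw [dotProduct_eq_add_of_support_subset hb₁.symm hs₁.subset, hb₁r₂, mul_zero, add_zero]
      at horth
    exact mul_ne_zero hr₁ hr₂ horth
  exact ⟨b₁, hb₁, r₁, r₂, hr, hs₁, hs₂⟩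

end IsWeighing

theorem stmt7 (d f : ℕ) (hd : 0 < d)
    (W : Fin f → Matrix (Fin d) (Fin d) ℝ)
    (hW : MQUWM (2 : ℝ) (4 : ℝ) (1 : ℝ) W) :
    f ≤ d - 1 := by
  obtain ⟨hWk, hWc⟩ := hW
  have hcross (i j : Fin f) (hij : i ≠ j) (r s : Fin d) :
      W i r ⬝ᵥ W j s = -1 ∨ W i r ⬝ᵥ W j s = 0 ∨ W i r ⬝ᵥ W j s = 1 := by
    have h := (hWc i j hij).1 r s
    simp only [Real.sqrt_one, inv_one, one_smul] at h
    exact h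
  let a : Fin d := ⟨0, hd⟩
  choose b hba r₁ r₂ hr h₁ h₂ using fun i => (hWk i).exists_rows_support_eq_pair a
  have hinj : Injective b := by
    intro i j hij
    by_contra hne
    have hzero (r : Fin d) (hsr : support (W i r) = {a, b i}) : W i r ⬝ᵥ W j (r₁ j) = 0 :=
      dotProduct_eq_zero_of_support_eq_pair ((hWk i).1 r) ((hWk j).1 _) (hba i).symm hsr
        (hij ▸ h₁ j) (hcross i j hne _ _)
    exact dotProduct_ne_zero_of_support_eq_pair (hba i).symm (h₁ i) (h₂ i) (hij ▸ h₁ j)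
      (((hWk i).dotProduct_row _ _).trans (if_neg (hr i))) (hzero _ (h₁ i)) (hzero _ (h₂ i))
  calc f = #(univ : Finset (Fin f)) := by simp
    _ ≤ #(univ.erase a) := card_le_card_of_injOn b (fun i _ => by simp [hba i]) hinj.injOn
    _ = d - 1 := by simp
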